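/- Let F : C ⥤ D be a functor between small categories and A a dependent presheaf over F^* X' for some presheaf X' on D. Define (F_† A)(Γ', x') to be the set of families α assigning to each Γ : C and δ' : D(F Γ ⟶ Γ') an element of A(Γ, x'[δ']), natural in Γ. Then sections of A over F^* X' are in natural bijection with sections of F_† A over X'; i.e., F_* extends to a dependent right adjoint of F^*. -/

import Mathlib

open CategoryTheory Opposite

universe u

variable {C D : Type u} [SmallCategory C] [SmallCategory D]

/-- Sections of a dependent presheaf `A` over a presheaf `Z` (encoded as a functor on the
category of elements of `Z`): natural families of elements. -/
def Sect {E : Type u} [SmallCategory E] {Z : Eᵒᵖ ⥤ Type u} (A : Z.Elements ⥤ Type u) :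
    Type u :=
  {s : ∀ e : Z.Elements, A.obj e // ∀ (e e' : Z.Elements) (f : e ⟶ e'), A.map f (s e) = s e'}

/-- The value of the dependent presheaf `F_† A` at an element `(Γ', x')` of `X'`: natural
families `α` assigning to each `Γ : C` and `δ' : F Γ ⟶ Γ'` an element of `A (Γ, x'[δ'])`. -/
def FdagSet (F : C ⥤ D) (X' : Dᵒᵖ ⥤ Type u) (A : (F.op ⋙ X').Elements ⥤ Type u)
    (v : X'.Elements) : Type u :=
  {α : ∀ (Γ : C) (δ' : F.obj Γ ⟶ v.1.unop),
      A.obj ((F.op ⋙ X').elementsMk (op Γ) (X'.map δ'.op v.2)) //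
    ∀ (Γ Δ : C) (σ : Γ ⟶ Δ) (δ' : F.obj Δ ⟶ v.1.unop),
      A.map (⟨σ.op, by
          show X'.map (F.map σ).op (X'.map δ'.op v.2) = X'.map (F.map σ ≫ δ').op v.2
          rw [op_comp, FunctorToTypes.map_comp_apply]⟩ :
        (F.op ⋙ X').elementsMk (op Δ) (X'.map δ'.op v.2) ⟶
          (F.op ⋙ X').elementsMk (op Γ) (X'.map (F.map σ ≫ δ').op v.2))
        (α Δ δ') = α Γ (F.map σ ≫ δ')}

/-!
A section `s` of `A` gives a section of `F_† A` by `(Γ, δ') ↦ s (Γ, x'[δ'])`.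
Conversely, a section `t` of `F_† A` yields the section `(Γ, x) ↦ t (F Γ, x) (Γ, 𝟙)` of `A`.
Naturality of `t` along `δ' : (F Γ, x'[δ']) ⟶ (Γ', x')` shows that every component
`t (Γ', x') (Γ, δ')` is of this form, so the two constructions are mutually inverse.
-/

lemma CategoryTheory.CategoryOfElements.eqToHom_val {E : Type*} [Category E] {Z : E ⥤ Type*}
    {x y : Z.Elements} (h : x = y) : (eqToHom h).val = eqToHom (congrArg Sigma.fst h) := by
  subst h; rfl

section

variable {F : C ⥤ D} {X' : Dᵒᵖ ⥤ Type u} {A : (F.op ⋙ X').Elements ⥤ Type u}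

lemma FdagSet.apply_eq_map_of_eq {v : X'.Elements} (α : FdagSet F X' A v) {Γ : C}
    {δ₁ δ₂ : F.obj Γ ⟶ v.1.unop} (h : δ₁ = δ₂) :
    α.1 Γ δ₂ = A.map (eqToHom (by rw [h])) (α.1 Γ δ₁) := by
  subst h; simp

variable (F X' A) in
abbrev FdagSections : Type u :=
  {t : ∀ v : X'.Elements, FdagSet F X' A v //
    ∀ (v v' : X'.Elements) (w : v ⟶ v') (Γ : C) (δ' : F.obj Γ ⟶ v'.1.unop),
      (t v').1 Γ δ' =
        A.map (eqToHom (by rw [op_comp, Quiver.Hom.op_unop, Functor.map_comp_apply, w.2]))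
          ((t v).1 Γ (δ' ≫ w.1.unop))}

lemma elementsMk_map_op_id (e : (F.op ⋙ X').Elements) :
    (F.op ⋙ X').elementsMk (op e.1.unop) (X'.map (𝟙 (F.obj e.1.unop)).op e.2) = e :=
  Functor.Elements.ext _ _ rfl (by simp)

namespace FdagSections

/-- A section of `F_† A` is determined by its components at identities. -/
lemma apply_id_eq (t : FdagSections F X' A) {Γ : C} {x : X'.obj (op (F.obj Γ))}
    {v : X'.Elements} (w : v ⟶ X'.elementsMk (op (F.obj Γ)) x) :
    (t.1 (X'.elementsMk (op (F.obj Γ)) x)).1 Γ (𝟙 _) =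
      A.map (eqToHom (by rw [Quiver.Hom.op_unop, w.2]; simp)) ((t.1 v).1 Γ w.1.unop) := by
  rw [t.2 v _ w Γ (𝟙 _), FdagSet.apply_eq_map_of_eq (t.1 v) (Category.id_comp w.1.unop).symm,
    ← Functor.map_comp_apply, eqToHom_trans]

def ofSect (s : Sect A) : FdagSections F X' A :=
  ⟨fun v => ⟨fun Γ δ' => s.1 ((F.op ⋙ X').elementsMk (op Γ) (X'.map δ'.op v.2)),
      fun _ _ _ _ => s.2 _ _ _⟩,
    fun _ _ _ _ _ => (s.2 _ _ (eqToHom _)).symm⟩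

def toSect (t : FdagSections F X' A) : Sect A :=
  ⟨fun e => A.map (eqToHom (elementsMk_map_op_id e))
      ((t.1 (X'.elementsMk (op (F.obj e.1.unop)) e.2)).1 e.1.unop (𝟙 _)), by
    intro e e' f
    dsimp only
    set α := t.1 (X'.elementsMk (op (F.obj e.1.unop)) e.2)
    have hf : X'.map (F.map f.1.unop).op e.2 = e'.2 := f.2
    rw [apply_id_eq t (v := X'.elementsMk (op (F.obj e.1.unop)) e.2) ⟨(F.map f.1.unop).op, hf⟩]
    dsimp only [Quiver.Hom.unop_op]
    rw [α.apply_eq_map_of_eq (Category.comp_id (F.map f.1.unop)),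
      ← α.2 e'.1.unop e.1.unop f.1.unop (𝟙 _)]
    simp only [← Functor.map_comp_apply A]
    exact congrArg (fun g => A.map g _) (by ext; simp [CategoryOfElements.eqToHom_val])⟩

def sectEquiv : Sect A ≃ FdagSections F X' A where
  toFun := ofSect
  invFun := toSect
  left_inv s := Subtype.ext <| funext fun e => s.2 _ _ (eqToHom (elementsMk_map_op_id e))
  right_inv t := by
    refine Subtype.ext <| funext fun v => Subtype.ext <| funext fun Γ => funext fun δ' => ?_
    change A.map _ _ = _
    rw [apply_id_eq t (x := X'.map δ'.op v.2) ⟨δ'.op, rfl⟩]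
    simp

end FdagSections

end

/-- Dependent right adjoint to `F^*`: for a dependent presheaf `A` over `F^* X'`, sections
of `A` over `F^* X'` are in natural bijection with sections over `X'` of the dependent
presheaf `F_† A`, i.e. `F_*` extends to a dependent right adjoint of `F^*`. -/
theorem sections_restrict_equiv_sections_ran (F : C ⥤ D) (X' : Dᵒᵖ ⥤ Type u)
    (A : (F.op ⋙ X').Elements ⥤ Type u) :
    Nonempty (Sect A ≃
      {t : ∀ v : X'.Elements, FdagSet F X' A v //
        ∀ (v v' : X'.Elements) (w : v ⟶ v') (Γ : C) (δ' : F.obj Γ ⟶ v'.1.unop),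
          (t v').1 Γ δ' =
            A.map (eqToHom (by
              rw [show X'.map (δ' ≫ w.1.unop).op v.2 = X'.map δ'.op v'.2 from by
                rw [op_comp, Quiver.Hom.op_unop, FunctorToTypes.map_comp_apply, w.2]]))
              ((t v).1 Γ (δ' ≫ w.1.unop))}) :=
  ⟨FdagSections.sectEquiv⟩
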